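/- arXiv:2408.09830 — 6 statements merged into one kernel-verified Lean document; each statement's English description precedes it below -/
import Mathlib

section
/- Let N be an odd positive integer and r coprime to N. Any two elements g, h ∈ GL₂(ℤ/Nℤ) with det(g) = det(h) = r satisfying g² = −r·I and h² = −r·I are conjugate in GL₂(ℤ/Nℤ). -/
open Matrix

/-! If `g² = -(det g) • 1` and `v` is a vector such that `v, g v` is a basis, then in that basis
`g` is the companion matrix `!![0, -det g; 1, 0]`, so any two such `g` with the same determinant
are conjugate. Modulo a maximal ideal `g` is not scalar, since a scalar `c` would give
`c² = -c²` with `2` and `c² = det g` units; a non-scalar `2 × 2` matrix has a cyclic vector, and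
the Chinese remainder theorem glues these local cyclic vectors into a global one, whose Krylov
determinant then lies in no maximal ideal. -/

namespace Matrix

variable {R : Type*} [CommRing R]

def krylovMatrix (M : Matrix (Fin 2) (Fin 2) R) (v : Fin 2 → R) : Matrix (Fin 2) (Fin 2) R :=
  (of ![v, M *ᵥ v])ᵀ

theorem det_krylovMatrix_map {S : Type*} [CommRing S] (f : R →+* S)
    (M : Matrix (Fin 2) (Fin 2) R) (v : Fin 2 → R) :
    f (krylovMatrix M v).det = (krylovMatrix (M.map f) (f ∘ v)).det := by
  simp [krylovMatrix, det_fin_two]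

theorem krylovMatrix_mul_companion {M : Matrix (Fin 2) (Fin 2) R} {r : R}
    (hsq : M * M = -(r • 1)) (v : Fin 2 → R) :
    krylovMatrix M v * !![0, -r; 1, 0] = M * krylovMatrix M v := by
  have hMMv : M *ᵥ (M *ᵥ v) = -(r • v) := by
    rw [mulVec_mulVec, hsq, neg_mulVec, smul_mulVec, one_mulVec]
  ext i j
  fin_cases j
  · change _ = (M *ᵥ v) i
    simp [krylovMatrix, mul_apply, Fin.sum_univ_two]
  · change _ = (M *ᵥ (M *ᵥ v)) i
    rw [hMMv]
    simp [krylovMatrix, mul_apply, Fin.sum_univ_two, mul_comm]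

theorem eq_scalar_of_forall_det_krylovMatrix_eq_zero {M : Matrix (Fin 2) (Fin 2) R}
    (h : ∀ v, (krylovMatrix M v).det = 0) : M = scalar (Fin 2) (M 0 0) := by
  have h₁ : M 1 0 = 0 := by simpa [krylovMatrix, det_fin_two] using h ![1, 0]
  have h₂ : M 0 1 = 0 := by simpa [krylovMatrix, det_fin_two] using h ![0, 1]
  have h₃ : M 1 0 + M 1 1 - (M 0 0 + M 0 1) = 0 := by
    simpa [krylovMatrix, det_fin_two] using h ![1, 1]
  have h₄ : M 1 1 = M 0 0 := by linear_combination h₃ - h₁ + h₂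
  ext i j
  fin_cases i <;> fin_cases j <;> simp [h₁, h₂, h₄]

theorem ne_scalar_of_mul_self_eq_neg_det_smul_one [Nontrivial R] {M : Matrix (Fin 2) (Fin 2) R}
    (h2 : IsUnit (2 : R)) (hdet : IsUnit M.det) (hsq : M * M = -(M.det • 1)) (c : R) :
    M ≠ scalar (Fin 2) c := by
  rintro rfl
  have hdet_c : (scalar (Fin 2) c).det = c ^ 2 := by simp
  have hc : c ^ 2 = -c ^ 2 := by simpa [hdet_c, sq] using congrFun (congrFun hsq 0) 0
  have h2c : 2 * c ^ 2 = 0 := by linear_combination hc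
  rw [hdet_c, h2.mul_right_eq_zero.mp h2c] at hdet
  exact not_isUnit_zero hdet

theorem exists_isUnit_det_krylovMatrix [Finite (MaximalSpectrum R)]
    {M : Matrix (Fin 2) (Fin 2) R} (h2 : IsUnit (2 : R)) (hdet : IsUnit M.det)
    (hsq : M * M = -(M.det • 1)) :
    ∃ v, IsUnit (krylovMatrix M v).det := by
  have hlocal (m : MaximalSpectrum R) :
      ∃ w, (krylovMatrix (M.map (Ideal.Quotient.mk m.asIdeal)) w).det ≠ 0 := by
    set f := Ideal.Quotient.mk m.asIdeal
    have hdet_map : (M.map f).det = f M.det := (f.map_det M).symm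
    by_contra! hw
    refine ne_scalar_of_mul_self_eq_neg_det_smul_one (h2.map f) (hdet_map ▸ hdet.map f) ?_ _
      (eq_scalar_of_forall_det_krylovMatrix_eq_zero hw)
    rw [hdet_map, ← Matrix.map_mul, hsq, Matrix.map_neg _ (map_neg f),
      Matrix.map_smul' _ _ _ (map_mul f), Matrix.map_one f f.map_zero f.map_one]
  choose w hw using hlocal
  choose v hv using fun i => Ideal.pi_quotient_surjective
    (fun _ _ hmn => MaximalSpectrum.isCoprime_of_ne hmn) (fun m => w m i)
  refine ⟨v, ?_⟩
  by_contra hv_unit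
  obtain ⟨m, hm, hmem⟩ := exists_max_ideal_of_mem_nonunits (mem_nonunits_iff.mpr hv_unit)
  apply hw ⟨m, hm⟩
  have hvw : Ideal.Quotient.mk m ∘ v = w ⟨m, hm⟩ := funext fun i => hv i ⟨m, hm⟩
  rw [← hvw, ← det_krylovMatrix_map, Ideal.Quotient.eq_zero_iff_mem]
  exact hmem

end Matrix

namespace Matrix.GeneralLinearGroup

variable {R : Type*} [CommRing R]

noncomputable def companion (d : Rˣ) : GL (Fin 2) R :=
  mk'' !![0, -(d : R); 1, 0] (by simp [det_fin_two_of])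

theorem isConj_companion_det [Finite (MaximalSpectrum R)] (h2 : IsUnit (2 : R))
    (g : GL (Fin 2) R)
    (hsq : (g : Matrix (Fin 2) (Fin 2) R) * g = -((g : Matrix (Fin 2) (Fin 2) R).det • 1)) :
    IsConj (companion (det g)) g := by
  obtain ⟨v, hv⟩ := exists_isUnit_det_krylovMatrix h2 (det g).isUnit hsq
  exact ⟨toUnits (mk'' _ hv), Units.ext (krylovMatrix_mul_companion hsq v)⟩

theorem isConj_of_mul_self_eq_neg_det_smul_one [Finite (MaximalSpectrum R)]
    (h2 : IsUnit (2 : R)) {g h : GL (Fin 2) R} (hdet : det g = det h)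
    (hg : (g : Matrix (Fin 2) (Fin 2) R) * g = -((g : Matrix (Fin 2) (Fin 2) R).det • 1))
    (hh : (h : Matrix (Fin 2) (Fin 2) R) * h = -((h : Matrix (Fin 2) (Fin 2) R).det • 1)) :
    IsConj g h :=
  (isConj_companion_det h2 g hg).symm.trans (hdet ▸ isConj_companion_det h2 h hh)

end Matrix.GeneralLinearGroup

theorem stmt_2_general (N : ℕ) (hNodd : Odd N) (r : ℤ)
    (g h : GL (Fin 2) (ZMod N))
    (hg : ((g : Matrix (Fin 2) (Fin 2) (ZMod N))).det = (r : ZMod N))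
    (hh : ((h : Matrix (Fin 2) (Fin 2) (ZMod N))).det = (r : ZMod N))
    (hg2 : (g : Matrix (Fin 2) (Fin 2) (ZMod N)) * (g : Matrix (Fin 2) (Fin 2) (ZMod N))
      = -((r : ZMod N) • (1 : Matrix (Fin 2) (Fin 2) (ZMod N))))
    (hh2 : (h : Matrix (Fin 2) (Fin 2) (ZMod N)) * (h : Matrix (Fin 2) (Fin 2) (ZMod N))
      = -((r : ZMod N) • (1 : Matrix (Fin 2) (Fin 2) (ZMod N)))) :
    IsConj g h := by
  have : NeZero N := ⟨hNodd.pos.ne'⟩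
  have h2 : IsUnit (2 : ZMod N) := by
    exact_mod_cast (ZMod.isUnit_iff_coprime 2 N).mpr (Nat.coprime_two_left.mpr hNodd)
  exact GeneralLinearGroup.isConj_of_mul_self_eq_neg_det_smul_one h2
    (Units.ext (hg.trans hh.symm)) (hg ▸ hg2) (hh ▸ hh2)

/-- Let `N` be an odd positive integer and `r` coprime to `N`.  Any two elements
`g, h ∈ GL₂(ℤ/Nℤ)` with `det g = det h = r` satisfying `g² = −r·I` and
`h² = −r·I` are conjugate in `GL₂(ℤ/Nℤ)`. -/
theorem stmt_2 (N : ℕ) (hN : 0 < N) (hNodd : Odd N) (r : ℤ) (hr : Int.gcd r N = 1)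
    (g h : GL (Fin 2) (ZMod N))
    (hg : ((g : Matrix (Fin 2) (Fin 2) (ZMod N))).det = (r : ZMod N))
    (hh : ((h : Matrix (Fin 2) (Fin 2) (ZMod N))).det = (r : ZMod N))
    (hg2 : (g : Matrix (Fin 2) (Fin 2) (ZMod N)) * (g : Matrix (Fin 2) (Fin 2) (ZMod N))
      = -((r : ZMod N) • (1 : Matrix (Fin 2) (Fin 2) (ZMod N))))
    (hh2 : (h : Matrix (Fin 2) (Fin 2) (ZMod N)) * (h : Matrix (Fin 2) (Fin 2) (ZMod N))
      = -((r : ZMod N) • (1 : Matrix (Fin 2) (Fin 2) (ZMod N)))) :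
    IsConj g h :=
  stmt_2_general N hNodd r g h hg hh hg2 hh2
end

section
/- Let N > 1 be an odd integer and r an integer coprime to N. The number of matrices g ∈ GL₂(ℤ/Nℤ) with det(g) = r and g² = −r·I equals N² · ∏_{p | N} (1 + (1/p)·χ(p)), where χ(p) = 1 if −r is a square mod p and χ(p) = −1 otherwise. Equivalently, it equals the number of pairs (a,b,c) with a² + bc = −r, counted as matrices of the form ((a, b),(c, −a)). -/
open scoped Classical

/-!
Since `det g = r` is a unit, Cayley–Hamilton turns `g² = -r` into `tr g = 0`, so the matrices
are the `((a, b), (c, -a))` with `a² + bc = -r`. The number of such triples is multiplicative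
in `N` by the Chinese remainder theorem. Modulo `p^k` with `p` odd, the triples with `c` a unit
number `p^k φ(p^k)` (`a` and `c` are free, `b` is determined); when `c` is not a unit,
`a² = -r - bc` is a unit congruent to `-r` mod `p`, hence has two square roots or none according
as `-r` is a square mod `p`. Squares lift from `ZMod p` to `ZMod (p^k)` because the kernel of
`(ZMod (p^k))ˣ → (ZMod p)ˣ` has odd order `p^(k-1)`, so squaring is bijective on it.
-/

abbrev Quadric {R : Type*} [CommRing R] (u : R) : Type _ :=
  {v : R × R × R // v.1 ^ 2 + v.2.1 * v.2.2 = u}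

theorem isSquare_of_isSquare_map {G H : Type*} [CommGroup G] [CommGroup H] (f : G →* H)
    (hf : Function.Surjective f) (hker : Odd (Nat.card f.ker)) {g : G}
    (hg : IsSquare (f g)) : IsSquare g := by
  obtain ⟨s, hs⟩ := hg
  obtain ⟨t, rfl⟩ := hf s
  have hgt : g * (t * t)⁻¹ ∈ f.ker := by simp [hs]
  obtain ⟨y, hy⟩ := (powCoprime (Nat.coprime_two_right.mpr hker)).surjective ⟨_, hgt⟩
  have hy' : (y : G) ^ 2 = g * (t * t)⁻¹ := congrArg Subtype.val hy
  refine ⟨t * y, ?_⟩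
  calc g = g * (t * t)⁻¹ * (t * t) := by group
    _ = t * y * (t * y) := by rw [← hy', sq]; ac_rfl

theorem Nat.card_units_add_card_nonunits (M : Type*) [Monoid M] [Finite M] :
    Nat.card Mˣ + Nat.card {x : M // ¬IsUnit x} = Nat.card M := by
  rw [Nat.card_congr (Equiv.ofInjective _ Units.val_injective), ← Nat.card_sum]
  exact Nat.card_congr (Equiv.sumCompl _)

theorem IsLocalRing.card_sq_eq_sq {R : Type*} [CommRing R] [IsLocalRing R] (h2 : IsUnit (2 : R))
    {a₀ : R} (ha₀ : IsUnit a₀) : Nat.card {a : R // a ^ 2 = a₀ ^ 2} = 2 := by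
  have hne : a₀ ≠ -a₀ := fun h => by
    have : (2 * a₀ : R) = 0 := by linear_combination h
    exact not_isUnit_zero (this ▸ h2.mul ha₀)
  have hroots : {a : R | a ^ 2 = a₀ ^ 2} = {a₀, -a₀} := by
    ext a
    simp only [Set.mem_ofPred_eq, Set.mem_insert_iff, Set.mem_singleton_iff]
    refine ⟨fun h => ?_, by rintro (rfl | rfl) <;> ring⟩
    have hsum : IsUnit ((a + a₀) + (a₀ - a)) := by
      convert h2.mul ha₀ using 1; ring
    rcases isUnit_or_isUnit_of_isUnit_add hsum with hu | hu
    · left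
      have : (a + a₀) * (a - a₀) = 0 := by linear_combination h
      linear_combination hu.mul_right_eq_zero.mp this
    · right
      have : (a₀ - a) * (a + a₀) = 0 := by linear_combination -h
      linear_combination hu.mul_right_eq_zero.mp this
  change Nat.card {a : R | a ^ 2 = a₀ ^ 2} = 2
  rw [Nat.card_coe_set_eq, hroots, Set.ncard_pair hne]

namespace Matrix

variable {R : Type*} [CommRing R]

theorem mul_self_eq_neg_smul_one_iff {g : Matrix (Fin 2) (Fin 2) R} {r : R} (hr : IsUnit r)
    (hdet : g.det = r) : g * g = -(r • 1) ↔ g.trace = 0 := by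
  obtain ⟨a, b, c, d, rfl⟩ : ∃ a b c d, g = !![a, b; c, d] := ⟨_, _, _, _, eta_fin_two g⟩
  rw [det_fin_two_of] at hdet
  subst hdet
  rw [trace_fin_two_of, ← ext_iff]
  simp only [Fin.forall_fin_two, mul_apply, Fin.sum_univ_two, neg_apply, smul_apply, one_apply,
    Fin.isValue, of_apply, cons_val', cons_val_zero, cons_val_fin_one, cons_val_one, ↓reduceIte,
    smul_eq_mul, mul_one, neg_sub, zero_ne_one, mul_zero, neg_zero, one_ne_zero]
  constructor
  · rintro ⟨⟨h00, h01⟩, -, -⟩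
    have : (a + d) * (a * d - b * c) = 0 := by linear_combination d * h00 - c * h01
    exact hr.mul_left_eq_zero.mp this
  · intro h
    exact ⟨⟨by linear_combination a * h, by linear_combination b * h⟩,
      by linear_combination c * h, by linear_combination d * h⟩

def finTwoSqEqNegEquivQuadric {r : R} (hr : IsUnit r) :
    {g : Matrix (Fin 2) (Fin 2) R // g.det = r ∧ g * g = -(r • 1)} ≃ Quadric (-r) where
  toFun g := ⟨(g.1 0 0, g.1 0 1, g.1 1 0), by
    have htr := (mul_self_eq_neg_smul_one_iff hr g.2.1).mp g.2.2
    have hdet := g.2.1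
    rw [trace_fin_two] at htr
    rw [det_fin_two] at hdet
    linear_combination g.1 0 0 * htr - hdet⟩
  invFun v := ⟨!![v.1.1, v.1.2.1; v.1.2.2, -v.1.1], by
    have hdet : (!![v.1.1, v.1.2.1; v.1.2.2, -v.1.1]).det = r := by
      rw [det_fin_two_of]; linear_combination -v.2
    exact ⟨hdet, (mul_self_eq_neg_smul_one_iff hr hdet).mpr (by simp [trace_fin_two_of])⟩⟩
  left_inv := by
    rintro ⟨g, hdet, hsq⟩
    rw [mul_self_eq_neg_smul_one_iff hr hdet, trace_fin_two] at hsq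
    ext i j
    fin_cases i <;> fin_cases j <;> simp [eq_neg_of_add_eq_zero_right hsq]
  right_inv _ := rfl

end Matrix

namespace Quadric

variable {R : Type*} [CommRing R]

def equivProdOfRingEquiv {S T : Type*} [CommRing S] [CommRing T] (e : R ≃+* S × T) (u : R) :
    Quadric u ≃ Quadric (e u).1 × Quadric (e u).2 where
  toFun v :=
    (⟨((e v.1.1).1, (e v.1.2.1).1, (e v.1.2.2).1), by simpa using congr_arg (e · |>.1) v.2⟩,
      ⟨((e v.1.1).2, (e v.1.2.1).2, (e v.1.2.2).2), by simpa using congr_arg (e · |>.2) v.2⟩)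
  invFun w := ⟨(e.symm (w.1.1.1, w.2.1.1), e.symm (w.1.1.2.1, w.2.1.2.1),
      e.symm (w.1.1.2.2, w.2.1.2.2)), e.injective <| by simp [w.1.2, w.2.2]⟩
  left_inv v := by simp
  right_inv w := by simp

theorem card_eq_of_forall_card_sq_eq [Finite R] (u : R) (m : ℕ)
    (hm : ∀ b c : R, ¬IsUnit c → Nat.card {a : R // a ^ 2 = u - b * c} = m) :
    Nat.card (Quadric u) =
      Nat.card R * Nat.card Rˣ + Nat.card R * Nat.card {c : R // ¬IsUnit c} * m := by
  have := Fintype.ofFinite R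
  let unitPart : {v : Quadric u // IsUnit v.1.2.2} ≃ R × Rˣ :=
    { toFun v := (v.1.1.1, v.2.unit)
      invFun w := ⟨⟨(w.1, (u - w.1 ^ 2) * ↑w.2⁻¹, w.2), by simp⟩, w.2.isUnit⟩
      left_inv := by
        rintro ⟨⟨⟨a, b, c⟩, hv⟩, hc⟩
        simp [← hv, mul_assoc]
      right_inv w := by simp }
  let nonunitPart : {v : Quadric u // ¬IsUnit v.1.2.2} ≃
      Σ t : R × {c : R // ¬IsUnit c}, {a : R // a ^ 2 = u - t.1 * t.2} :=
    { toFun v := ⟨(v.1.1.2.1, ⟨v.1.1.2.2, v.2⟩), ⟨v.1.1.1, eq_sub_of_add_eq v.1.2⟩⟩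
      invFun w := ⟨⟨(w.2, w.1.1, w.1.2), by simp [w.2.2]⟩, w.1.2.2⟩
      left_inv _ := rfl
      right_inv _ := rfl }
  rw [← Nat.card_congr (Equiv.sumCompl fun v : Quadric u => IsUnit v.1.2.2), Nat.card_sum,
    Nat.card_congr unitPart, Nat.card_congr nonunitPart, Nat.card_sigma, Nat.card_prod]
  simp only [fun t : R × {c : R // ¬IsUnit c} => hm t.1 t.2 t.2.2, Finset.sum_const,
    Finset.card_univ, smul_eq_mul, ← Nat.card_eq_fintype_card, Nat.card_prod]

end Quadric

namespace ZMod

theorem isUnit_intCast_of_gcd_eq_one {r : ℤ} {m N : ℕ} (hm : m ∣ N) (hr : Int.gcd r N = 1) :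
    IsUnit (r : ZMod m) := by
  have h := (Int.isCoprime_iff_gcd_eq_one.mpr hr).intCast (R := ZMod m)
  rwa [Int.cast_natCast, (natCast_eq_zero_iff N m).mpr hm, isCoprime_zero_right] at h

theorem card_quadric_mul (r : ℤ) {m n : ℕ} (h : m.Coprime n) :
    Nat.card (Quadric (-(r : ZMod (m * n)))) =
      Nat.card (Quadric (-(r : ZMod m))) * Nat.card (Quadric (-(r : ZMod n))) := by
  rw [Nat.card_congr (Quadric.equivProdOfRingEquiv (chineseRemainder h) _), Nat.card_prod]
  simp

theorem card_quadric_one (r : ℤ) : Nat.card (Quadric (-(r : ZMod 1))) = 1 :=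
  Nat.card_eq_one_iff_unique.mpr ⟨inferInstance, ⟨⟨0, Subsingleton.elim _ _⟩⟩⟩

variable {p k : ℕ} [Fact p.Prime]

theorem isUnit_prime_pow_iff (hk : k ≠ 0) (x : ZMod (p ^ k)) :
    IsUnit x ↔ castHom (dvd_pow_self p hk) (ZMod p) x ≠ 0 := by
  have : NeZero (p ^ k) := ⟨pow_ne_zero k (Fact.out : p.Prime).ne_zero⟩
  rw [← natCast_zmod_val x, isUnit_natCast_iff_not_dvd_pow Fact.out (Nat.pos_of_ne_zero hk),
    map_natCast, Ne, natCast_eq_zero_iff]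

theorem isLocalRing_prime_pow (hk : k ≠ 0) : IsLocalRing (ZMod (p ^ k)) :=
  haveI : Fact (1 < p ^ k) := ⟨Nat.one_lt_pow hk (Fact.out : p.Prime).one_lt⟩
  .of_isUnit_or_isUnit_one_sub_self fun a => by
    simp only [isUnit_prime_pow_iff hk, map_sub, map_one]
    by_contra! h
    simp [h.1] at h

theorem card_ker_unitsMap_prime_pow (hk : k ≠ 0) :
    Nat.card (unitsMap (dvd_pow_self p hk)).ker = p ^ (k - 1) := by
  have hp : p.Prime := Fact.out
  have : NeZero (p ^ k) := ⟨pow_ne_zero k hp.ne_zero⟩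
  have h := (unitsMap (dvd_pow_self p hk)).ker.card_mul_index
  rw [Subgroup.index_ker, MonoidHom.range_eq_top.mpr (unitsMap_surjective _),
    Subgroup.card_top, Nat.card_eq_fintype_card (α := (ZMod p)ˣ),
    Nat.card_eq_fintype_card (α := (ZMod (p ^ k))ˣ), card_units_eq_totient, card_units_eq_totient,
    Nat.totient_prime hp, Nat.totient_prime_pow hp (Nat.pos_of_ne_zero hk)] at h
  exact Nat.eq_of_mul_eq_mul_right (Nat.sub_pos_of_lt hp.one_lt) h

theorem isSquare_of_isSquare_castHom (hp2 : p ≠ 2) (hk : k ≠ 0) {w : ZMod (p ^ k)}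
    (hw : IsUnit w) (hsq : IsSquare (castHom (dvd_pow_self p hk) (ZMod p) w)) : IsSquare w := by
  have hp : p.Prime := Fact.out
  have : NeZero (p ^ k) := ⟨pow_ne_zero k hp.ne_zero⟩
  obtain ⟨s, hs⟩ := hsq
  have hs0 : s ≠ 0 := by
    rintro rfl
    exact (isUnit_prime_pow_iff hk w).mp hw (by simpa using hs)
  have hunit : IsSquare (unitsMap (dvd_pow_self p hk) hw.unit) :=
    ⟨Units.mk0 s hs0, Units.ext (by simpa [unitsMap_def] using hs)⟩
  have hker : Odd (Nat.card (unitsMap (dvd_pow_self p hk)).ker) := by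
    rw [card_ker_unitsMap_prime_pow hk]
    exact (hp.odd_of_ne_two hp2).pow
  simpa using (isSquare_of_isSquare_map _ (unitsMap_surjective _) hker hunit).map
    (Units.coeHom (ZMod (p ^ k)))

theorem card_sq_eq (hp2 : p ≠ 2) (hk : k ≠ 0) {w : ZMod (p ^ k)} (hw : IsUnit w) :
    Nat.card {a : ZMod (p ^ k) // a ^ 2 = w} =
      if IsSquare (castHom (dvd_pow_self p hk) (ZMod p) w) then 2 else 0 := by
  have := isLocalRing_prime_pow (p := p) hk
  split_ifs with hsq
  · obtain ⟨a₀, rfl⟩ := isSquare_of_isSquare_castHom hp2 hk hw hsq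
    have h2 : IsUnit (2 : ZMod (p ^ k)) := by
      rw [isUnit_prime_pow_iff hk, map_ofNat]
      exact Ring.two_ne_zero (by rwa [ringChar_zmod_n])
    rw [← sq]
    exact IsLocalRing.card_sq_eq_sq h2 (isUnit_of_mul_isUnit_left hw)
  · rw [Nat.card_eq_zero]
    refine .inl ⟨fun ⟨a, ha⟩ => hsq ⟨castHom (dvd_pow_self p hk) (ZMod p) a, ?_⟩⟩
    rw [← ha, map_pow, sq]

theorem card_quadric_prime_pow (hp2 : p ≠ 2) (hk : k ≠ 0) {u : ZMod (p ^ k)} (hu : IsUnit u) :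
    (Nat.card (Quadric u) : ℚ) = ((p : ℚ) ^ k) ^ 2 *
      (1 + (if IsSquare (castHom (dvd_pow_self p hk) (ZMod p) u) then 1 else -1) / p) := by
  have hp : p.Prime := Fact.out
  have : NeZero (p ^ k) := ⟨pow_ne_zero k hp.ne_zero⟩
  have hroots (b c : ZMod (p ^ k)) (hc : ¬IsUnit c) :
      Nat.card {a // a ^ 2 = u - b * c} =
        if IsSquare (castHom (dvd_pow_self p hk) (ZMod p) u) then 2 else 0 := by
    have hρ : castHom (dvd_pow_self p hk) (ZMod p) (u - b * c) =
        castHom (dvd_pow_self p hk) (ZMod p) u := by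
      rw [isUnit_prime_pow_iff hk, not_not] at hc
      rw [map_sub, map_mul, hc, mul_zero, sub_zero]
    have hunit : IsUnit (u - b * c) := by
      rw [isUnit_prime_pow_iff hk, hρ, ← isUnit_prime_pow_iff hk]
      exact hu
    rw [card_sq_eq hp2 hk hunit, hρ]
  obtain ⟨j, rfl⟩ : ∃ j, k = j + 1 := ⟨k - 1, by omega⟩
  have hunits : Nat.card (ZMod (p ^ (j + 1)))ˣ = p ^ j * (p - 1) := by
    rw [Nat.card_eq_fintype_card, card_units_eq_totient, Nat.totient_prime_pow_succ hp]
  have hnonunits : Nat.card {c : ZMod (p ^ (j + 1)) // ¬IsUnit c} = p ^ j := by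
    have hsum := Nat.card_units_add_card_nonunits (ZMod (p ^ (j + 1)))
    have hp1 : p ^ (j + 1) = p ^ j * (p - 1) + p ^ j := by
      rw [pow_succ, ← Nat.mul_add_one, Nat.sub_add_cancel hp.one_le]
    rw [hunits, Nat.card_zmod] at hsum
    omega
  rw [Quadric.card_eq_of_forall_card_sq_eq u _ hroots, Nat.card_zmod, hunits, hnonunits]
  push_cast [hp.one_le]
  have : (p : ℚ) ≠ 0 := by exact_mod_cast hp.ne_zero
  split_ifs <;> field_simp <;> ring

end ZMod

theorem stmt_3_general (N : ℕ) (hNodd : Odd N) (r : ℤ) (hr : Int.gcd r N = 1) :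
    ((Nat.card {g : Matrix (Fin 2) (Fin 2) (ZMod N) //
        g.det = (r : ZMod N) ∧
        g * g = -((r : ZMod N) • (1 : Matrix (Fin 2) (Fin 2) (ZMod N)))} : ℚ)
      = (N : ℚ) ^ 2 * ∏ p ∈ N.primeFactors,
          (1 + (if IsSquare (-(r : ZMod p)) then (1 : ℚ) else -1) / (p : ℚ)))
    ∧ Nat.card {g : Matrix (Fin 2) (Fin 2) (ZMod N) //
        g.det = (r : ZMod N) ∧
        g * g = -((r : ZMod N) • (1 : Matrix (Fin 2) (Fin 2) (ZMod N)))}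
      = Nat.card {v : ZMod N × ZMod N × ZMod N //
          v.1 ^ 2 + v.2.1 * v.2.2 = -(r : ZMod N)} := by
  have hcard := Nat.card_congr
    (Matrix.finTwoSqEqNegEquivQuadric (ZMod.isUnit_intCast_of_gcd_eq_one dvd_rfl hr))
  refine ⟨?_, hcard⟩
  have hN0 : N ≠ 0 := hNodd.pos.ne'
  rw [hcard, Nat.multiplicative_factorization (fun n => Nat.card (Quadric (-(r : ZMod n))))
      (fun _ _ => ZMod.card_quadric_mul r) (ZMod.card_quadric_one r) hN0, Finsupp.prod,
    Nat.support_factorization, Nat.cast_prod]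
  have hN : (N : ℚ) ^ 2 = ∏ p ∈ N.primeFactors, ((p : ℚ) ^ N.factorization p) ^ 2 := by
    rw [Finset.prod_pow]
    exact_mod_cast congrArg (· ^ 2) (Nat.prod_primeFactors_pow_factorization hN0)
  rw [hN, ← Finset.prod_mul_distrib]
  refine Finset.prod_congr rfl fun p hp => ?_
  have : Fact p.Prime := ⟨Nat.prime_of_mem_primeFactors hp⟩
  have hk : N.factorization p ≠ 0 := Finsupp.mem_support_iff.mp hp
  rw [ZMod.card_quadric_prime_pow (hNodd.ne_two_of_dvd_nat (Nat.dvd_of_mem_primeFactors hp)) hk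
    (ZMod.isUnit_intCast_of_gcd_eq_one (Nat.ordProj_dvd N p) hr).neg, map_neg, map_intCast]
  -- the two sides differ only in the `Decidable` instance of the `if`
  congr

/-- Let `N > 1` be an odd integer and `r` an integer coprime to `N`.  The number of
matrices `g ∈ GL₂(ℤ/Nℤ)` with `det g = r` and `g² = −r·I` equals
`N² · ∏_{p | N} (1 + χ(p)/p)` where `χ(p) = 1` if `−r` is a square mod `p` and `−1`
otherwise; equivalently it equals the number of triples `(a,b,c)` with `a² + bc = −r`
(counted as the matrices `((a,b),(c,−a))`). -/
theorem stmt_3 (N : ℕ) (hN : 1 < N) (hNodd : Odd N) (r : ℤ) (hr : Int.gcd r N = 1) :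
    ((Nat.card {g : Matrix (Fin 2) (Fin 2) (ZMod N) //
        g.det = (r : ZMod N) ∧
        g * g = -((r : ZMod N) • (1 : Matrix (Fin 2) (Fin 2) (ZMod N)))} : ℚ)
      = (N : ℚ) ^ 2 * ∏ p ∈ N.primeFactors,
          (1 + (if IsSquare (-(r : ZMod p)) then (1 : ℚ) else -1) / (p : ℚ)))
    ∧ Nat.card {g : Matrix (Fin 2) (Fin 2) (ZMod N) //
        g.det = (r : ZMod N) ∧
        g * g = -((r : ZMod N) • (1 : Matrix (Fin 2) (Fin 2) (ZMod N)))}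
      = Nat.card {v : ZMod N × ZMod N × ZMod N //
          v.1 ^ 2 + v.2.1 * v.2.2 = -(r : ZMod N)} :=
  stmt_3_general N hNodd r hr
end

section
/- Let M be an odd positive integer and r coprime to M. Then the number of solutions (a, b) ∈ (ℤ/Mℤ)² to a² + b² = −r equals M · ∏_{p | M} (1 − (1/p)·((−1/p))), where ((−1/p)) denotes the Legendre symbol of −1 modulo p. -/
open scoped Classical

/-!
Over a finite field of odd order `q` with quadratic character `χ`, the number of solutions of
`x² + y² = c ≠ 0` is `∑ₓ (1 + χ(c - x²))`; substituting `u = x²` turns the character sum into the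
Jacobi sum `J(χ, χ) = J(χ, χ⁻¹) = -χ(-1)`, so there are `q - χ(-1)` solutions.

Modulo `p^(k+1)` with `k ≥ 1`, the kernel of reduction to `ℤ/p^k` squares to zero, so on the
fibre over a solution `(a, b)` the equation becomes linear in `(x - a, y - b)`. One of `a`, `b` is a
unit since `a² + b²` is, hence every solution lifts to exactly `p` solutions. The Chinese remainder
theorem makes the count multiplicative in the modulus.
-/

open Finset

section FiniteField

variable {F : Type*} [Field F] [Fintype F]

lemma sum_comp_sq (hF : ringChar F ≠ 2) (f : F → ℤ) :
    ∑ x : F, f (x ^ 2) = ∑ u : F, (quadraticChar F u + 1) * f u := by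
  rw [← sum_fiberwise univ (· ^ 2) (fun x => f (x ^ 2))]
  refine sum_congr rfl fun u _ => ?_
  rw [sum_congr rfl fun x hx => congrArg f (mem_filter.mp hx).2, sum_const, nsmul_eq_mul,
    ← quadraticChar_card_sqrts hF u, Set.toFinset_ofPred]

lemma sum_quadraticChar_sub_sq (hF : ringChar F ≠ 2) {c : F} (hc : c ≠ 0) :
    ∑ x : F, quadraticChar F (c - x ^ 2) = -quadraticChar F (-1) := by
  have hjacobi : ∑ u : F, quadraticChar F u * quadraticChar F (c - u)
      = jacobiSum (quadraticChar F) (quadraticChar F) := by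
    refine (Fintype.sum_equiv (Equiv.mulLeft₀ c hc) _ _ fun x => ?_).symm
    rw [Equiv.mulLeft₀_apply, show c - c * x = c * (1 - x) by ring, map_mul, map_mul,
      mul_mul_mul_comm, ← sq, quadraticChar_sq_one hc, one_mul]
  have hshift : ∑ u : F, quadraticChar F (c - u) = 0 := by
    rw [← quadraticChar_sum_zero hF]
    exact Fintype.sum_equiv (Equiv.subLeft c) _ _ fun _ => rfl
  calc ∑ x : F, quadraticChar F (c - x ^ 2)
      = ∑ u : F, (quadraticChar F u * quadraticChar F (c - u) + quadraticChar F (c - u)) := by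
        simp only [sum_comp_sq hF (fun u => quadraticChar F (c - u)), add_mul, one_mul]
    _ = -quadraticChar F (-1) := by
        rw [sum_add_distrib, hjacobi, hshift, add_zero]
        nth_rw 2 [← (quadraticChar_isQuadratic F).inv]
        exact jacobiSum_nontrivial_inv (quadraticChar_ne_one hF)

lemma card_sq_add_sq_finiteField (hF : ringChar F ≠ 2) {c : F} (hc : c ≠ 0) :
    (Nat.card {v : F × F // v.1 ^ 2 + v.2 ^ 2 = c} : ℤ)
      = Fintype.card F - quadraticChar F (-1) := by
  let e : {v : F × F // v.1 ^ 2 + v.2 ^ 2 = c} ≃ Σ x : F, {y : F // y ^ 2 = c - x ^ 2} :=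
    { toFun := fun v => ⟨v.1.1, v.1.2, eq_sub_of_add_eq' v.2⟩
      invFun := fun w => ⟨(w.1, w.2.1), add_eq_of_eq_sub' w.2.2⟩ }
  have hfiber (x : F) :
      (Nat.card {y : F // y ^ 2 = c - x ^ 2} : ℤ) = quadraticChar F (c - x ^ 2) + 1 := by
    rw [← quadraticChar_card_sqrts hF, Set.toFinset_card, Nat.card_eq_fintype_card]
    rfl
  rw [Nat.card_congr e, Nat.card_sigma, Nat.cast_sum, sum_congr rfl fun x _ => hfiber x,
    sum_add_distrib, sum_quadraticChar_sub_sq hF hc, sum_const, card_univ]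
  simp only [nsmul_eq_mul, mul_one]
  ring

end FiniteField

section Lift

variable {R S : Type*} [CommRing R] [CommRing S] (f : R →+* S)

lemma card_fiber_sq_add_sq_of_isUnit
    (hker : ∀ x ∈ RingHom.ker f, ∀ y ∈ RingHom.ker f, x * y = 0) (h2 : IsUnit (2 : R))
    {a b c : R} (ha : IsUnit a) (habc : a ^ 2 + b ^ 2 - c ∈ RingHom.ker f) :
    Nat.card {v : R × R // v.1 ^ 2 + v.2 ^ 2 = c ∧ f v.1 = f a ∧ f v.2 = f b}
      = Nat.card (RingHom.ker f) := by
  have hlin (x y : R) (hx : f x = f a) (hy : f y = f b) :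
      x ^ 2 + y ^ 2 = c ↔ 2 * a * (x - a) = -(a ^ 2 + b ^ 2 - c + 2 * b * (y - b)) := by
    rw [← RingHom.sub_mem_ker_iff] at hx hy
    rw [← sub_eq_zero, ← add_eq_zero_iff_eq_neg]
    exact iff_of_eq <| congrArg (· = 0) <| by linear_combination hker _ hx _ hx + hker _ hy _ hy
  have h2a : IsUnit (2 * a) := h2.mul ha
  refine Nat.card_eq_of_bijective
    (fun v => ⟨v.1.2 - b, (RingHom.sub_mem_ker_iff f).mpr v.2.2.2⟩) ⟨?_, fun t => ?_⟩
  · rintro ⟨⟨x, y⟩, hxy, hx, hy⟩ ⟨⟨x', y'⟩, hxy', hx', hy'⟩ h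
    obtain rfl : y = y' := by simpa using h
    have := ((hlin x y hx hy).mp hxy).trans ((hlin x' y hx' hy').mp hxy').symm
    simpa using h2a.mul_left_cancel this
  · set s := -(↑h2a.unit⁻¹ * (a ^ 2 + b ^ 2 - c + 2 * b * t))
    have hs : s ∈ RingHom.ker f :=
      neg_mem (Ideal.mul_mem_left _ _ (add_mem habc (Ideal.mul_mem_left _ _ t.2)))
    have hx : f (a + s) = f a := by rw [map_add, RingHom.mem_ker.mp hs, add_zero]
    have hy : f (b + t) = f b := by rw [map_add, RingHom.mem_ker.mp t.2, add_zero]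
    refine ⟨⟨(a + s, b + t), (hlin _ _ hx hy).mpr ?_, hx, hy⟩, by ext; simp⟩
    simp only [s, add_sub_cancel_left, mul_neg, ← mul_assoc, IsUnit.mul_val_inv, one_mul]

lemma card_fiber_sq_add_sq [IsLocalRing R]
    (hker : ∀ x ∈ RingHom.ker f, ∀ y ∈ RingHom.ker f, x * y = 0) (h2 : IsUnit (2 : R))
    {a b c : R} (hc : IsUnit c) (habc : a ^ 2 + b ^ 2 - c ∈ RingHom.ker f) :
    Nat.card {v : R × R // v.1 ^ 2 + v.2 ^ 2 = c ∧ f v.1 = f a ∧ f v.2 = f b}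
      = Nat.card (RingHom.ker f) := by
  have hnil : IsNilpotent (a ^ 2 + b ^ 2 - c) := ⟨2, by rw [sq]; exact hker _ habc _ habc⟩
  have hunit : IsUnit (a ^ 2 + b ^ 2) := by
    simpa using hnil.isUnit_add_left_of_commute hc (Commute.all _ _)
  rcases IsLocalRing.isUnit_or_isUnit_of_isUnit_add hunit with ha | hb
  · exact card_fiber_sq_add_sq_of_isUnit f hker h2 ((isUnit_pow_iff two_ne_zero).mp ha) habc
  · rw [← card_fiber_sq_add_sq_of_isUnit f hker h2 ((isUnit_pow_iff two_ne_zero).mp hb)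
      (by rwa [add_comm (b ^ 2)])]
    exact Nat.card_congr <| (Equiv.prodComm R R).subtypeEquiv fun v => by
      simp only [Equiv.prodComm_apply, Prod.fst_swap, Prod.snd_swap, add_comm (v.1 ^ 2), and_comm]

theorem card_sq_add_sq_eq_card_ker_mul [IsLocalRing R] [Finite R] (hf : Function.Surjective f)
    (hker : ∀ x ∈ RingHom.ker f, ∀ y ∈ RingHom.ker f, x * y = 0) (h2 : IsUnit (2 : R))
    {c : R} (hc : IsUnit c) :
    Nat.card {v : R × R // v.1 ^ 2 + v.2 ^ 2 = c}
      = Nat.card (RingHom.ker f) * Nat.card {w : S × S // w.1 ^ 2 + w.2 ^ 2 = f c} := by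
  have : Finite S := Finite.of_surjective f hf
  have : Fintype {w : S × S // w.1 ^ 2 + w.2 ^ 2 = f c} := Fintype.ofFinite _
  let π (v : {v : R × R // v.1 ^ 2 + v.2 ^ 2 = c}) : {w : S × S // w.1 ^ 2 + w.2 ^ 2 = f c} :=
    ⟨(f v.1.1, f v.1.2), by simp only [← map_pow, ← map_add, v.2]⟩
  have hfiber (w : {w : S × S // w.1 ^ 2 + w.2 ^ 2 = f c}) :
      Nat.card {v // π v = w} = Nat.card (RingHom.ker f) := by
    obtain ⟨⟨x, y⟩, hw⟩ := w
    obtain ⟨a, rfl⟩ := hf x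
    obtain ⟨b, rfl⟩ := hf y
    have habc : a ^ 2 + b ^ 2 - c ∈ RingHom.ker f := by
      simpa only [RingHom.sub_mem_ker_iff, map_add, map_pow] using hw
    rw [← card_fiber_sq_add_sq f hker h2 hc habc]
    exact Nat.card_congr <| (Equiv.subtypeEquivRight fun _ => Subtype.ext_iff).trans <|
      (Equiv.subtypeSubtypeEquivSubtypeInter (fun v : R × R => v.1 ^ 2 + v.2 ^ 2 = c)
        fun v => (f v.1, f v.2) = (f a, f b)).trans <|
      Equiv.subtypeEquivRight fun _ => and_congr_right fun _ => Prod.ext_iff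
  rw [← Nat.card_congr (Equiv.sigmaFiberEquiv π), Nat.card_sigma,
    sum_congr rfl fun w _ => hfiber w, sum_const, card_univ, ← Nat.card_eq_fintype_card,
    smul_eq_mul, mul_comm]

end Lift

section Congr

variable {R S : Type*} [Semiring R] [Semiring S]

lemma card_sq_add_sq_congr (e : R ≃+* S) (c : R) :
    Nat.card {v : R × R // v.1 ^ 2 + v.2 ^ 2 = c}
      = Nat.card {w : S × S // w.1 ^ 2 + w.2 ^ 2 = e c} :=
  Nat.card_congr <| (e.toEquiv.prodCongr e.toEquiv).subtypeEquiv fun v => by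
    simp only [Equiv.prodCongr_apply, Prod.map_fst, Prod.map_snd, RingEquiv.toEquiv_eq_coe,
      EquivLike.coe_coe, ← map_pow, ← map_add, e.injective.eq_iff]

lemma card_sq_add_sq_prod (c : R × S) :
    Nat.card {v : (R × S) × (R × S) // v.1 ^ 2 + v.2 ^ 2 = c}
      = Nat.card {v : R × R // v.1 ^ 2 + v.2 ^ 2 = c.1}
        * Nat.card {w : S × S // w.1 ^ 2 + w.2 ^ 2 = c.2} := by
  rw [← Nat.card_prod]
  exact Nat.card_congr <| ((Equiv.prodProdProdComm R S R S).subtypeEquiv fun v => by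
    simp only [Prod.ext_iff, Equiv.prodProdProdComm_apply, Prod.fst_add, Prod.snd_add,
      Prod.pow_fst, Prod.pow_snd]).trans Equiv.subtypeProdEquivProd

end Congr

lemma ZMod.mul_eq_zero_of_mem_ker_castHom {p k : ℕ} (hk : k ≠ 0) {x y : ZMod (p ^ (k + 1))}
    (hx : x ∈ RingHom.ker (ZMod.castHom (pow_dvd_pow p k.le_succ) (ZMod (p ^ k))))
    (hy : y ∈ RingHom.ker (ZMod.castHom (pow_dvd_pow p k.le_succ) (ZMod (p ^ k)))) :
    x * y = 0 := by
  obtain ⟨x, rfl⟩ := ZMod.intCast_surjective x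
  obtain ⟨y, rfl⟩ := ZMod.intCast_surjective y
  simp only [RingHom.mem_ker, map_intCast, ZMod.intCast_zmod_eq_zero_iff_dvd] at hx hy
  rw [← Int.cast_mul, ZMod.intCast_zmod_eq_zero_iff_dvd]
  calc ((p ^ (k + 1) : ℕ) : ℤ) ∣ (p : ℤ) ^ k * (p : ℤ) ^ k := by
        rw [← pow_add, Nat.cast_pow]; exact pow_dvd_pow _ (by omega)
    _ ∣ x * y := mul_dvd_mul (by exact_mod_cast hx) (by exact_mod_cast hy)

section PrimePow

variable {p : ℕ} [Fact p.Prime]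

lemma ZMod.isLocalRing_prime_pow_s4 {k : ℕ} (hk : k ≠ 0) : IsLocalRing (ZMod (p ^ k)) :=
  have : Nontrivial (ZMod (p ^ k)) :=
    ZMod.nontrivial_iff.mpr (Nat.one_lt_pow hk (Fact.out : p.Prime).one_lt).ne'
  IsLocalRing.of_surjective' (PadicInt.toZModPow k) (ZMod.ringHom_surjective _)

lemma ZMod.isUnit_two_prime_pow (hp : p ≠ 2) (k : ℕ) : IsUnit (2 : ZMod (p ^ k)) := by
  have := (ZMod.isUnit_iff_coprime 2 (p ^ k)).mpr <|
    Nat.Coprime.pow_right _ <| (Nat.coprime_primes Nat.prime_two Fact.out).mpr hp.symm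
  simpa using this

lemma ZMod.card_ker_castHom_prime_pow (k : ℕ) :
    Nat.card (RingHom.ker (ZMod.castHom (pow_dvd_pow p k.le_succ) (ZMod (p ^ k)))) = p := by
  set f := ZMod.castHom (pow_dvd_pow p k.le_succ) (ZMod (p ^ k))
  have h := f.toAddMonoidHom.ker.card_mul_index
  rw [AddSubgroup.index_ker, AddMonoidHom.range_eq_top.mpr (ZMod.ringHom_surjective f),
    AddSubgroup.card_top, Nat.card_zmod, Nat.card_zmod] at h
  exact Nat.eq_of_mul_eq_mul_left (pow_pos (Fact.out : p.Prime).pos k)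
    ((mul_comm _ _).trans (h.trans (pow_succ p k)))

lemma card_sq_add_sq_zmod_prime (hp : p ≠ 2) {c : ZMod p} (hc : c ≠ 0) :
    (Nat.card {v : ZMod p × ZMod p // v.1 ^ 2 + v.2 ^ 2 = c} : ℚ)
      = p - if IsSquare (-1 : ZMod p) then 1 else -1 := by
  have h := card_sq_add_sq_finiteField (by rwa [ZMod.ringChar_zmod_n]) hc
  rw [ZMod.card, quadraticChar_apply, quadraticCharFun, if_neg (neg_ne_zero.mpr one_ne_zero)] at h
  split_ifs at h ⊢ <;> exact_mod_cast h

lemma card_sq_add_sq_zmod_prime_pow (hp : p ≠ 2) (k : ℕ) {c : ZMod (p ^ (k + 1))}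
    (hc : IsUnit c) :
    (Nat.card {v : ZMod (p ^ (k + 1)) × ZMod (p ^ (k + 1)) // v.1 ^ 2 + v.2 ^ 2 = c} : ℚ)
      = p ^ (k + 1) * (1 - (if IsSquare (-1 : ZMod p) then 1 else -1) / p) := by
  have hp0 : (p : ℚ) ≠ 0 := by exact_mod_cast (Fact.out : p.Prime).ne_zero
  induction k with
  | zero =>
    rw [card_sq_add_sq_congr (ZMod.ringEquivCongr (pow_one p)),
      card_sq_add_sq_zmod_prime hp (hc.map _).ne_zero]
    field_simp
    ring
  | succ k ih =>
    have : IsLocalRing (ZMod (p ^ (k + 1 + 1))) := ZMod.isLocalRing_prime_pow_s4 (by omega)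
    rw [card_sq_add_sq_eq_card_ker_mul _ (ZMod.ringHom_surjective _)
      (fun x hx y hy => ZMod.mul_eq_zero_of_mem_ker_castHom k.succ_ne_zero hx hy)
      (ZMod.isUnit_two_prime_pow hp _) hc, ZMod.card_ker_castHom_prime_pow, Nat.cast_mul,
      ih (hc.map _)]
    ring

end PrimePow

theorem card_sq_add_sq_zmod (n : ℕ) (hn : Odd n) {c : ZMod n} (hc : IsUnit c) :
    (Nat.card {v : ZMod n × ZMod n // v.1 ^ 2 + v.2 ^ 2 = c} : ℚ)
      = n * ∏ p ∈ n.primeFactors, (1 - (if IsSquare (-1 : ZMod p) then (1 : ℚ) else -1) / p) := by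
  induction n using Nat.recOnPosPrimePosCoprime with
  | prime_pow p k hp hk =>
    have : Fact p.Prime := ⟨hp⟩
    have hp2 : p ≠ 2 := by
      rintro rfl
      exact Nat.not_even_iff_odd.mpr hn ((Nat.even_pow' hk.ne').mpr even_two)
    obtain ⟨k, rfl⟩ := Nat.exists_eq_add_one_of_ne_zero hk.ne'
    rw [card_sq_add_sq_zmod_prime_pow hp2 k hc, Nat.primeFactors_prime_pow hk.ne' hp,
      prod_singleton, Nat.cast_pow]
    congr
  | zero => exact absurd hn (by decide)
  | one =>
    rw [Nat.card_eq_one_iff_unique.mpr ⟨inferInstance, ⟨⟨0, Subsingleton.elim _ _⟩⟩⟩]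
    simp
  | coprime a b _ _ hab iha ihb =>
    obtain ⟨hca, hcb⟩ := Prod.isUnit_iff.mp (hc.map (ZMod.chineseRemainder hab))
    rw [card_sq_add_sq_congr (ZMod.chineseRemainder hab), card_sq_add_sq_prod, Nat.cast_mul,
      iha (Nat.odd_mul.mp hn).1 hca, ihb (Nat.odd_mul.mp hn).2 hcb,
      Nat.Coprime.primeFactors_mul hab, prod_union hab.disjoint_primeFactors]
    push_cast
    ring

theorem stmt_4_general (M : ℕ) (hModd : Odd M) (r : ℤ) (hr : Int.gcd r M = 1) :
    ((Nat.card {v : ZMod M × ZMod M // v.1 ^ 2 + v.2 ^ 2 = -(r : ZMod M)} : ℚ))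
      = (M : ℚ) * ∏ p ∈ M.primeFactors,
          (1 - (if IsSquare (-1 : ZMod p) then (1 : ℚ) else -1) / (p : ℚ)) := by
  have hunit : IsUnit (r : ZMod M) := (ZMod.coe_int_isUnit_iff_isCoprime r M).mpr <|
    Int.isCoprime_iff_gcd_eq_one.mpr (by rwa [Int.gcd_comm])
  exact card_sq_add_sq_zmod M hModd hunit.neg

/-- Let `M` be an odd positive integer and `r` coprime to `M`.  Then the number of
solutions `(a,b) ∈ (ℤ/Mℤ)²` to `a² + b² = −r` equals
`M · ∏_{p | M} (1 − (1/p)·((−1/p)))`, where `((−1/p))` is the Legendre symbol of `−1`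
modulo `p` (i.e. `1` if `−1` is a square mod `p`, and `−1` otherwise). -/
theorem stmt_4 (M : ℕ) (hM : 0 < M) (hModd : Odd M) (r : ℤ) (hr : Int.gcd r M = 1) :
    ((Nat.card {v : ZMod M × ZMod M // v.1 ^ 2 + v.2 ^ 2 = -(r : ZMod M)} : ℚ))
      = (M : ℚ) * ∏ p ∈ M.primeFactors,
          (1 - (if IsSquare (-1 : ZMod p) then (1 : ℚ) else -1) / (p : ℚ)) :=
  stmt_4_general M hModd r hr
end

section
/- Let k ≥ 3 and let r ∈ (ℤ/2ᵏℤ)ˣ with r ≡ 5 (mod 8). Then every g ∈ GL₂(ℤ/2ᵏℤ) with det(g) = r and g² = ±r·I satisfies g² = −r·I and has trace zero, and moreover at least one of the off-diagonal entries of g is a unit. -/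
private lemma even_of_not_isUnit {k : ℕ} (hk : 1 ≤ k) {x : ZMod (2 ^ k)}
    (hx : ¬ IsUnit x) : ∃ y : ZMod (2 ^ k), x = 2 * y := by
  have hne : NeZero (2 ^ k) := ⟨by positivity⟩
  by_cases h2 : 2 ∣ x.val
  · obtain ⟨m, hm⟩ := h2
    exact ⟨(m : ZMod (2 ^ k)), by
      rw [← ZMod.natCast_zmod_val x, hm]; push_cast; ring⟩
  · exfalso
    apply hx
    have hcop : Nat.Coprime x.val (2 ^ k) := by
      apply Nat.Coprime.pow_right
      exact ((Nat.Prime.coprime_iff_not_dvd Nat.prime_two).mpr h2).symm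
    have := (ZMod.isUnit_iff_coprime x.val (2 ^ k)).mpr hcop
    rwa [ZMod.natCast_zmod_val x] at this

/-- Let `k ≥ 3` and let `r` be a unit of `ℤ/2ᵏℤ` with `r ≡ 5 (mod 8)`.  Then every
`g ∈ GL₂(ℤ/2ᵏℤ)` with `det g = r` and `g² = ±r·I` satisfies `g² = −r·I`, has trace
zero, and at least one of its off-diagonal entries is a unit. -/
theorem stmt_8 (k : ℕ) (hk : 3 ≤ k) (r : ℤ) (hr : r % 8 = 5)
    (g : Matrix (Fin 2) (Fin 2) (ZMod (2 ^ k)))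
    (hunit : IsUnit g.det)
    (hdet : g.det = (r : ZMod (2 ^ k)))
    (hsq : g * g = (r : ZMod (2 ^ k)) • (1 : Matrix (Fin 2) (Fin 2) (ZMod (2 ^ k)))
      ∨ g * g = -((r : ZMod (2 ^ k)) • (1 : Matrix (Fin 2) (Fin 2) (ZMod (2 ^ k))))) :
    g * g = -((r : ZMod (2 ^ k)) • (1 : Matrix (Fin 2) (Fin 2) (ZMod (2 ^ k))))
      ∧ g.trace = 0
      ∧ (IsUnit (g 0 1) ∨ IsUnit (g 1 0)) := by
  set a := g 0 0 with ha
  set b := g 0 1 with hb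
  set c := g 1 0 with hc
  set d := g 1 1 with hd
  have hdvd : (8 : ℕ) ∣ 2 ^ k := by
    calc (8:ℕ) = 2 ^ 3 := rfl
    _ ∣ 2 ^ k := pow_dvd_pow 2 hk
  let φ : ZMod (2 ^ k) →+* ZMod 8 := ZMod.castHom hdvd (ZMod 8)
  have hφr : φ ((r : ZMod (2 ^ k))) = 5 := by
    rw [map_intCast]
    have : ((5 : ℤ) : ZMod 8) = (5 : ZMod 8) := by norm_num
    rw [← this, ZMod.intCast_eq_intCast_iff]
    show r % 8 = 5 % 8
    omega
  have hdet' : a * d - b * c = (r : ZMod (2 ^ k)) := by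
    rw [← hdet, Matrix.det_fin_two]
  -- Case g² = r • 1 is impossible
  rcases hsq with h | h
  · exfalso
    have h00 := congrFun (congrFun h 0) 0
    have h01 := congrFun (congrFun h 0) 1
    have h10 := congrFun (congrFun h 1) 0
    have h11 := congrFun (congrFun h 1) 1
    simp [Matrix.mul_apply, Fin.sum_univ_two, Matrix.smul_apply, Matrix.one_apply,
      ← ha, ← hb, ← hc, ← hd] at h00 h01 h10 h11
    have key : ∀ A B C D : ZMod 8, ¬ (A*A + B*C = 5 ∧ A*B + B*D = 0 ∧ C*A + D*C = 0
        ∧ C*B + D*D = 5 ∧ A*D - B*C = 5) := by decide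
    apply key (φ a) (φ b) (φ c) (φ d)
    refine ⟨?_, ?_, ?_, ?_, ?_⟩
    · rw [← map_mul, ← map_mul, ← map_add, h00, hφr]
    · rw [← map_mul, ← map_mul, ← map_add, h01, map_zero]
    · rw [← map_mul, ← map_mul, ← map_add, h10, map_zero]
    · rw [← map_mul, ← map_mul, ← map_add, h11, hφr]
    · rw [← map_mul, ← map_mul, ← map_sub, hdet', hφr]
  · have h00 := congrFun (congrFun h 0) 0
    have h01 := congrFun (congrFun h 0) 1
    have h10 := congrFun (congrFun h 1) 0
    have h11 := congrFun (congrFun h 1) 1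
    simp [Matrix.mul_apply, Fin.sum_univ_two, Matrix.smul_apply, Matrix.one_apply,
      ← ha, ← hb, ← hc, ← hd] at h00 h01 h10 h11
    -- h00 : a*a + b*c = -r, h01 : a*b + b*d = 0, etc.
    have hru : IsUnit ((r : ZMod (2 ^ k))) := hdet ▸ hunit
    have haa : a * (a + d) = 0 := by linear_combination h00 + hdet'
    have htr0 : a + d = 0 := by
      have hr0 : (r : ZMod (2 ^ k)) * (a + d) = 0 := by
        linear_combination -(a + d) * hdet' + d * haa - c * h01
      exact hru.mul_left_cancel (by rw [hr0, mul_zero])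
    refine ⟨h, ?_, ?_⟩
    · rw [Matrix.trace_fin_two]; exact htr0
    · by_contra hbc
      push_neg at hbc
      obtain ⟨hb', hc'⟩ := hbc
      obtain ⟨x, hx⟩ := even_of_not_isUnit (by omega) hb'
      obtain ⟨y, hy⟩ := even_of_not_isUnit (by omega) hc'
      have key2 : ∀ A X Y : ZMod 8, A*A + (2*X)*(2*Y) ≠ 3 := by decide
      have hB : φ b = 2 * φ x := by rw [hx, map_mul, map_ofNat]
      have hC : φ c = 2 * φ y := by rw [hy, map_mul, map_ofNat]
      have h8 : φ a * φ a + φ b * φ c = -5 := by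
        have h' := congrArg φ h00
        rw [map_add, map_mul, map_mul, map_neg, hφr] at h'
        exact h'
      apply key2 (φ a) (φ x) (φ y)
      rw [← hB, ← hC, h8]
      decide
end

section
/- Let k ≥ 2 and g = ((a, b), (c, d)) ∈ GL₂(ℤ/2ᵏℤ) with g² = det(g)·I and g ≠ ±λ·I for all scalars λ. Then a = d and 2b = 2c = 0 in ℤ/2ᵏℤ, i.e., b and c lie in {0, 2^{k−1}}. -/
/-- Let `k ≥ 2` and `g = ((a,b),(c,d)) ∈ GL₂(ℤ/2ᵏℤ)` with `g² = det(g)·I` and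
`g ≠ ±λ·I` for all scalars `λ`.  Then `a = d` and `2b = 2c = 0` in `ℤ/2ᵏℤ`. -/
theorem stmt_9 (k : ℕ) (hk : 2 ≤ k)
    (g : Matrix (Fin 2) (Fin 2) (ZMod (2 ^ k)))
    (hunit : IsUnit g.det)
    (hsq : g * g = g.det • (1 : Matrix (Fin 2) (Fin 2) (ZMod (2 ^ k))))
    (hns : ∀ lam : ZMod (2 ^ k),
      g ≠ lam • (1 : Matrix (Fin 2) (Fin 2) (ZMod (2 ^ k)))) :
    g 0 0 = g 1 1 ∧ 2 * g 0 1 = 0 ∧ 2 * g 1 0 = 0 := by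
  have h2k : (2:ℕ) ∣ 2^k := dvd_pow_self 2 (by omega)
  set π : ZMod (2^k) →+* ZMod 2 := ZMod.castHom h2k (ZMod 2) with hπ
  have hpi : ∀ x : ZMod (2^k), π x = (x.val : ZMod 2) := fun x => by
    rw [hπ, ZMod.castHom_apply, ← ZMod.natCast_val]
  -- unit iff image is 1
  have hone : ∀ y : ZMod 2, y ≠ 0 → y = 1 := by decide
  have hAfwd : ∀ x : ZMod (2^k), IsUnit x → π x = 1 := fun x hx =>
    hone _ (hx.map π).ne_zero
  have hAbwd : ∀ x : ZMod (2^k), π x = 1 → IsUnit x := by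
    intro x hx
    have h2 : ¬ (2 ∣ x.val) := by
      intro hdvd
      rw [hpi] at hx
      rw [(ZMod.natCast_eq_zero_iff x.val 2).mpr hdvd] at hx
      exact absurd hx (by decide)
    have hcop : Nat.Coprime x.val (2^k) :=
      Nat.Coprime.pow_right _ (Nat.coprime_two_right.mpr (Nat.odd_iff.mpr (by omega)))
    have := (ZMod.isUnit_iff_coprime x.val (2^k)).mpr hcop
    rwa [ZMod.natCast_val, ZMod.cast_id] at this
  -- 2*x = 0 implies π x = 0
  have hB : ∀ x : ZMod (2^k), 2 * x = 0 → π x = 0 := by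
    intro x hx
    have : ((2 * x.val : ℕ) : ZMod (2^k)) = 0 := by
      push_cast
      rw [ZMod.natCast_val, ZMod.cast_id]; exact hx
    have hdvd : 2^k ∣ 2 * x.val := (ZMod.natCast_eq_zero_iff _ _).mp this
    have hpk : 2^k = 2 * 2^(k-1) := by
      rw [← pow_succ']; congr 1; omega
    obtain ⟨m, hm⟩ := hdvd
    have hm' : 2 * x.val = 2 * (2 ^ (k-1) * m) := by rw [hm, hpk, mul_assoc]
    have hxval : x.val = 2^(k-1) * m := Nat.eq_of_mul_eq_mul_left (by norm_num) hm'
    have hx2 : 2 ∣ x.val :=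
      ⟨2^(k-2) * m, by rw [hxval, show k - 1 = (k-2)+1 by omega]; ring⟩
    rw [hpi]
    exact (ZMod.natCast_eq_zero_iff _ _).mpr hx2
  -- π x = 0 implies x = 2*s
  have hC : ∀ x : ZMod (2^k), π x = 0 → ∃ s, x = 2 * s := by
    intro x hx
    rw [hpi] at hx
    obtain ⟨m, hm⟩ := (ZMod.natCast_eq_zero_iff _ _).mp hx
    refine ⟨(m : ZMod (2^k)), ?_⟩
    have : ((x.val : ℕ) : ZMod (2^k)) = x := by rw [ZMod.natCast_val, ZMod.cast_id]
    rw [← this, hm]; push_cast; ring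
  set a := g 0 0 with ha; set b := g 0 1 with hb; set c := g 1 0 with hc
  set d := g 1 1 with hd
  set D := g.det with hD
  have hdet : D = a*d - b*c := by rw [hD, Matrix.det_fin_two]
  have e00 := congrFun (congrFun hsq 0) 0
  have e01 := congrFun (congrFun hsq 0) 1
  have e10 := congrFun (congrFun hsq 1) 0
  have e11 := congrFun (congrFun hsq 1) 1
  simp [Matrix.mul_apply, Fin.sum_univ_two, Matrix.smul_apply, Matrix.one_apply] at e00 e01 e10 e11
  -- e00 : a*a + b*c = D, e01 : a*b + b*d = 0, e10 : c*a + d*c = 0, e11 : c*b + d*d = D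
  have ht_a : (a + d) * a = 2 * D := by linear_combination e00 - hdet
  have ht_d : (a + d) * d = 2 * D := by linear_combination e11 - hdet
  by_cases ht : IsUnit (a + d)
  · exfalso
    have hb0 : b = 0 := by
      have : b * (a + d) = 0 := by linear_combination e01
      exact (ht.mul_left_eq_zero).mp this
    have hc0 : c = 0 := by
      have : c * (a + d) = 0 := by linear_combination e10
      exact (ht.mul_left_eq_zero).mp this
    have had : a = d := ht.mul_left_cancel (by rw [ht_a, ht_d])
    apply hns a
    ext i j
    fin_cases i <;> fin_cases j <;>
      simp [Matrix.smul_apply, Matrix.one_apply, ← ha, ← hb, ← hc, ← hd, hb0, hc0, had]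
  · -- a + d = 2s
    have hπt : π (a + d) = 0 := by
      by_contra h
      exact ht (hAbwd _ (hone _ h))
    obtain ⟨s, hs⟩ := hC _ hπt
    have h2sa : 2 * (s * a - D) = 0 := by
      rw [hs] at ht_a; linear_combination ht_a
    have hπsa : π (s * a - D) = 0 := hB _ h2sa
    have hπD : π D = 1 := hAfwd _ hunit
    have hπs_a : π s * π a = 1 := by
      have h' : π (s * a) = π D := by
        have h := hπsa; rw [map_sub, sub_eq_zero] at h; exact h
      rw [← map_mul, h', hπD]
    have hkey : ∀ u v : ZMod 2, u * v = 1 → u = 1 ∧ v = 1 := by decide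
    obtain ⟨hπs1, hπa1⟩ := hkey _ _ hπs_a
    have hsu : IsUnit s := hAbwd _ hπs1
    have hau : IsUnit a := hAbwd _ hπa1
    have h2b : 2 * b = 0 := by
      have h' : (2 * b) * s = 0 := by linear_combination e01 - b * hs
      exact hsu.mul_left_eq_zero.mp h'
    have h2c : 2 * c = 0 := by
      have h' : (2 * c) * s = 0 := by linear_combination e10 - c * hs
      exact hsu.mul_left_eq_zero.mp h'
    have had : a = d := by
      have h' : a * (a - d) = 0 := by linear_combination e00 + hdet - c * h2b
      exact sub_eq_zero.mp (hau.mul_right_eq_zero.mp h')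
    exact ⟨had, h2b, h2c⟩
end

section
/- Let N = 2M with M odd, M > 1, and let r be coprime to N. Suppose g ∈ GL₂(ℤ/Nℤ) has det(g) = r and g² = ±r·I. Then, writing g = (g₂, g_M) under the isomorphism GL₂(ℤ/Nℤ) ≅ GL₂(ℤ/2ℤ) × GL₂(ℤ/Mℤ), either (i) g² = r·I and g_M is a scalar matrix, or (ii) g² = −r·I and g_M has trace zero. -/
/-!
By the Chinese remainder theorem only the reduction `h` of `g` modulo `M` matters, and there
`det h = r` is a unit and `2` is a unit. Cayley–Hamilton gives `h² = (tr h) h - (det h) I`.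
If `h² = (det h) I` this reads `(tr h) h = 2 (det h) I`; taking determinants shows that `tr h` is
a unit, so `h` is scalar. If `h² = -(det h) I` it reads `(tr h) h = 0`, and since `h` is
invertible, `tr h = 0`.
-/

namespace Matrix

variable {R : Type*} [CommRing R]

theorem mul_self_fin_two (A : Matrix (Fin 2) (Fin 2) R) :
    A * A = A.trace • A - A.det • (1 : Matrix (Fin 2) (Fin 2) R) := by
  ext i j
  fin_cases i <;> fin_cases j <;>
    simp [mul_apply, Fin.sum_univ_two, trace_fin_two, det_fin_two] <;> ring

theorem exists_eq_smul_one_of_mul_self_eq_det_smul (h2 : IsUnit (2 : R))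
    {A : Matrix (Fin 2) (Fin 2) R} (hA : IsUnit A.det) (hsq : A * A = A.det • 1) :
    ∃ c : R, A = c • 1 := by
  have htrace : A.trace • A = (2 * A.det) • (1 : Matrix (Fin 2) (Fin 2) R) := by
    have hCH := mul_self_fin_two A
    rw [hsq, eq_sub_iff_add_eq] at hCH
    rw [two_mul, add_smul, hCH]
  have hdet : A.trace ^ 2 * A.det = (2 * A.det) ^ 2 := by
    simpa [det_smul] using congrArg det htrace
  obtain ⟨u, hu⟩ : IsUnit A.trace :=
    (isUnit_pow_iff two_ne_zero).mp
      (isUnit_of_mul_isUnit_left (hdet ▸ (h2.mul hA).pow 2))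
  refine ⟨↑u⁻¹ * (2 * A.det), ?_⟩
  rw [mul_smul, ← htrace, ← hu, smul_smul, Units.inv_mul, one_smul]

theorem trace_eq_zero_of_mul_self_eq_neg_det_smul {A : Matrix (Fin 2) (Fin 2) R}
    (hA : IsUnit A.det) (hsq : A * A = -(A.det • 1)) : A.trace = 0 := by
  have htrace : A.trace • A = 0 := by
    have hCH := mul_self_fin_two A
    rw [hsq, eq_sub_iff_add_eq, neg_add_cancel] at hCH
    exact hCH.symm
  have hscalar : A.trace • (1 : Matrix (Fin 2) (Fin 2) R) = 0 := by
    rw [← mul_nonsing_inv A hA, ← smul_mul_assoc, htrace, zero_mul]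
  simpa using congrFun (congrFun hscalar 0) 0

theorem map_mul_self_eq_smul_one {S : Type*} [CommRing S] {n : Type*} [Fintype n]
    [DecidableEq n] (f : R →+* S) {A : Matrix n n R} {c : R} (h : A * A = c • 1) :
    A.map f * A.map f = f c • 1 := by
  rw [← Matrix.map_mul, h]
  ext i j
  simp [one_apply, apply_ite f]

end Matrix

theorem ZMod.isUnit_two_of_odd {M : ℕ} (hM : Odd M) : IsUnit (2 : ZMod M) := by
  exact_mod_cast (ZMod.isUnit_iff_coprime 2 M).mpr (Nat.coprime_two_left.mpr hM)

theorem stmt_16_general (M : ℕ) (hModd : Odd M) (r : ℤ)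
    (g : Matrix (Fin 2) (Fin 2) (ZMod (2 * M)))
    (hunit : IsUnit g.det)
    (hdet : g.det = (r : ZMod (2 * M)))
    (hsq : g * g = (r : ZMod (2 * M)) • (1 : Matrix (Fin 2) (Fin 2) (ZMod (2 * M)))
      ∨ g * g = -((r : ZMod (2 * M)) • (1 : Matrix (Fin 2) (Fin 2) (ZMod (2 * M))))) :
    (g * g = (r : ZMod (2 * M)) • (1 : Matrix (Fin 2) (Fin 2) (ZMod (2 * M)))
      ∧ ∃ lam : ZMod M,
          g.map (ZMod.castHom (dvd_mul_left M 2) (ZMod M))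
            = lam • (1 : Matrix (Fin 2) (Fin 2) (ZMod M)))
    ∨ (g * g = -((r : ZMod (2 * M)) • (1 : Matrix (Fin 2) (Fin 2) (ZMod (2 * M))))
      ∧ (g.map (ZMod.castHom (dvd_mul_left M 2) (ZMod M))).trace = 0) := by
  set φ := ZMod.castHom (dvd_mul_left M 2) (ZMod M)
  have hdetM : (g.map φ).det = φ g.det := (φ.map_det g).symm
  have hunitM : IsUnit (g.map φ).det := hdetM ▸ hunit.map φ
  rw [← hdet] at hsq ⊢
  rcases hsq with hs | hs
  · refine Or.inl ⟨hs, Matrix.exists_eq_smul_one_of_mul_self_eq_det_smul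
      (ZMod.isUnit_two_of_odd hModd) hunitM ?_⟩
    rw [Matrix.map_mul_self_eq_smul_one φ hs, hdetM]
  · refine Or.inr ⟨hs, Matrix.trace_eq_zero_of_mul_self_eq_neg_det_smul hunitM ?_⟩
    rw [← neg_smul] at hs
    rw [Matrix.map_mul_self_eq_smul_one φ hs, map_neg, hdetM, neg_smul]

/-- Let `N = 2M` with `M` odd, `M > 1`, and let `r` be coprime to `N`.  Suppose
`g ∈ GL₂(ℤ/Nℤ)` has `det g = r` and `g² = ±r·I`.  Then, writing `g_M` for the
reduction of `g` modulo `M` (the second component of `g` under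
`GL₂(ℤ/Nℤ) ≅ GL₂(ℤ/2ℤ) × GL₂(ℤ/Mℤ)`), either (i) `g² = r·I` and `g_M` is a
scalar matrix, or (ii) `g² = −r·I` and `g_M` has trace zero. -/
theorem stmt_16 (M : ℕ) (hModd : Odd M) (hM : 1 < M) (r : ℤ)
    (hr : Int.gcd r (2 * M) = 1)
    (g : Matrix (Fin 2) (Fin 2) (ZMod (2 * M)))
    (hunit : IsUnit g.det)
    (hdet : g.det = (r : ZMod (2 * M)))
    (hsq : g * g = (r : ZMod (2 * M)) • (1 : Matrix (Fin 2) (Fin 2) (ZMod (2 * M)))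
      ∨ g * g = -((r : ZMod (2 * M)) • (1 : Matrix (Fin 2) (Fin 2) (ZMod (2 * M))))) :
    (g * g = (r : ZMod (2 * M)) • (1 : Matrix (Fin 2) (Fin 2) (ZMod (2 * M)))
      ∧ ∃ lam : ZMod M,
          g.map (ZMod.castHom (dvd_mul_left M 2) (ZMod M))
            = lam • (1 : Matrix (Fin 2) (Fin 2) (ZMod M)))
    ∨ (g * g = -((r : ZMod (2 * M)) • (1 : Matrix (Fin 2) (Fin 2) (ZMod (2 * M))))
      ∧ (g.map (ZMod.castHom (dvd_mul_left M 2) (ZMod M))).trace = 0) :=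
  stmt_16_general M hModd r g hunit hdet hsq
end
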